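/- Let C = XᵀX/n have unit diagonal and suppose the columns of X are in general position so that V(·; β̌, u) has a unique minimizer for every u. Fix β̌ ∈ R^p with |supp(β̌)| ≤ q and supp(β̌) ⊆ A₀, σ > 0 and σ̂ > 0 with max{|σ̂/σ − 1|, |σ/σ̂ − 1|} ≤ ζ ∈ [0,1), and assume κ(q, 3) > 0. Let u* ∈ R^p satisfy |u*_j| ≤ (1 − ζ) w_j λ/2 for all j, and define δ* = argmin_δ V(δ; β̌, u*) and δ*₀ = argmin_δ V(δ; β̌, (σ/σ̂)u*). Then (1/n)‖X(δ* − δ*₀)‖₂² ≤ 32 w_max r² λ² ζ Σ_{j∈A₀} w_j² / (w_min κ(q,3)²). -/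

import Mathlib

/-!
Comparing a minimizer δ of `V(·; β̌, u)` with `0` (the basic inequality) puts it in the cone
`∑_{Acᶜ} w|δ| ≤ 3 ∑_{Ac} w|δ|`, where the restricted eigenvalue condition and Cauchy–Schwarz
bound `∑_{Ac} w|δ|` by `3λr ∑_{Ac} w²/κ²`. Comparing each of `δ*`, `δ*₀` with their midpoint, the
parallelogram law for `‖X·‖²` and the convexity of the penalty give
`‖X(δ* − δ*₀)‖² ≤ 2nr ⟨δ* − δ*₀, u* − (σ/σ̂)u*⟩`, and `|1 − σ/σ̂| ≤ ζ` bounds the right-hand side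
by `nrζλ ∑ w|δ* − δ*₀|`.
-/

open Matrix

/-- The localized Lasso criterion `V(δ; b, u)`, where `C = XᵀX/n`. -/
noncomputable def Vfun {n p : ℕ} (X : Matrix (Fin n) (Fin p) ℝ) (w : Fin p → ℝ)
    (lam r : ℝ) (b u δ : Fin p → ℝ) : ℝ :=
  (n / (2 * r ^ 2)) * dotProduct δ (((n : ℝ)⁻¹ • (Xᵀ * X)).mulVec δ)
    - (n / r) * dotProduct δ u
    + n * lam * ∑ j, w j * (|b j + δ j / r| - |b j|)

open Finset

section WeightedL1

variable {ι : Type*} [Fintype ι] {w : ι → ℝ}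

theorem dotProduct_le_mul_sum_mul_abs {c : ℝ} {u : ι → ℝ} (hu : ∀ j, |u j| ≤ c * w j)
    (δ : ι → ℝ) : δ ⬝ᵥ u ≤ c * ∑ j, w j * |δ j| := by
  rw [mul_sum]
  refine sum_le_sum fun j _ => ?_
  calc δ j * u j ≤ |δ j| * |u j| := by rw [← abs_mul]; exact le_abs_self _
    _ ≤ |δ j| * (c * w j) := mul_le_mul_of_nonneg_left (hu j) (abs_nonneg _)
    _ = c * (w j * |δ j|) := by ring

theorem sum_mul_abs_sub_le (hw : ∀ j, 0 ≤ w j) (δ δ' : ι → ℝ) :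
    ∑ j, w j * |δ j - δ' j| ≤ ∑ j, w j * |δ j| + ∑ j, w j * |δ' j| := by
  rw [← sum_add_distrib]
  refine sum_le_sum fun j _ => ?_
  rw [← mul_add]
  exact mul_le_mul_of_nonneg_left (abs_sub _ _) (hw j)

theorem two_mul_penalty_midpoint_le (hw : ∀ j, 0 ≤ w j) (r : ℝ) (b δ δ' : ι → ℝ) :
    2 * ∑ j, w j * (|b j + ((2 : ℝ)⁻¹ • (δ + δ')) j / r| - |b j|) ≤
      ∑ j, w j * (|b j + δ j / r| - |b j|) + ∑ j, w j * (|b j + δ' j / r| - |b j|) := by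
  rw [mul_sum, ← sum_add_distrib]
  refine sum_le_sum fun j _ => ?_
  have hmid : 2 * |b j + ((2 : ℝ)⁻¹ • (δ + δ')) j / r| =
      |(b j + δ j / r) + (b j + δ' j / r)| := by
    rw [← abs_two, ← abs_mul, abs_two]
    congr 1
    simp only [Pi.smul_apply, Pi.add_apply, smul_eq_mul]
    ring
  have hconv := mul_le_mul_of_nonneg_left (hmid ▸ abs_add_le _ _) (hw j)
  linarith

variable [DecidableEq ι]

theorem sum_mul_abs_le_four_mul_of_cone {s : Finset ι} {δ : ι → ℝ}
    (hcone : ∑ j ∈ sᶜ, w j * |δ j| ≤ 3 * ∑ j ∈ s, w j * |δ j|) :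
    ∑ j, w j * |δ j| ≤ 4 * ∑ j ∈ s, w j * |δ j| := by
  rw [← sum_add_sum_compl s]
  linarith

theorem sum_compl_sub_sum_le_penalty (hw : ∀ j, 0 ≤ w j) {r : ℝ} (hr : 0 < r) {b : ι → ℝ}
    {s : Finset ι} (hb : ∀ j ∉ s, b j = 0) (δ : ι → ℝ) :
    (∑ j ∈ sᶜ, w j * |δ j| - ∑ j ∈ s, w j * |δ j|) / r ≤
      ∑ j, w j * (|b j + δ j / r| - |b j|) := by
  rw [← sum_add_sum_compl s, sub_div, sum_div, sum_div, sub_eq_neg_add, ← sum_neg_distrib]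
  gcongr with j hj j hj
  · rw [mul_div_assoc, ← mul_neg]
    refine mul_le_mul_of_nonneg_left ?_ (hw j)
    have := abs_sub (b j + δ j / r) (δ j / r)
    rw [add_sub_cancel_right, abs_div, abs_of_pos hr] at this
    linarith
  · rw [hb j (mem_compl.mp hj), zero_add, abs_zero, sub_zero, abs_div, abs_of_pos hr,
      mul_div_assoc]

end WeightedL1

theorem le_mul_div_sq_of_sq_le_mul {T W s c κ : ℝ} (hT : 0 ≤ T) (hW : 0 ≤ W) (hc : 0 ≤ c)
    (hκ : 0 < κ) (hTs : T ^ 2 ≤ W * s) (hs : κ ^ 2 * s ≤ c * T) : T ≤ c * W / κ ^ 2 := by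
  rw [le_div_iff₀ (by positivity)]
  rcases hT.eq_or_lt with rfl | hT
  · simpa using mul_nonneg hc hW
  refine le_of_mul_le_mul_right ?_ hT
  nlinarith [mul_le_mul_of_nonneg_left hs hW, mul_le_mul_of_nonneg_left hTs (sq_nonneg κ)]

theorem sq_mul_le_of_mul_sqrt_le {κ ν s Q : ℝ} (hκ : 0 ≤ κ) (hν : 0 ≤ ν) (hs : 0 ≤ s)
    (hQ : 0 ≤ Q) (h : κ * √ν * √s ≤ √Q) : κ ^ 2 * ν * s ≤ Q := by
  have := pow_le_pow_left₀ (by positivity) h 2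
  rwa [mul_pow, mul_pow, Real.sq_sqrt hν, Real.sq_sqrt hs, Real.sq_sqrt hQ] at this

section Vfun

variable {n p : ℕ} (X : Matrix (Fin n) (Fin p) ℝ) (w : Fin p → ℝ) (lam r : ℝ)

theorem Vfun_eq (b u δ : Fin p → ℝ) :
    Vfun X w lam r b u δ = (2 * r ^ 2)⁻¹ * ∑ i, (X *ᵥ δ) i ^ 2 - n / r * (δ ⬝ᵥ u)
      + n * lam * ∑ j, w j * (|b j + δ j / r| - |b j|) := by
  have hquad : δ ⬝ᵥ ((n : ℝ)⁻¹ • (Xᵀ * X)) *ᵥ δ = (n : ℝ)⁻¹ * ∑ i, (X *ᵥ δ) i ^ 2 := by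
    rw [smul_mulVec, dotProduct_smul, smul_eq_mul, ← mulVec_mulVec, dotProduct_mulVec,
      vecMul_transpose]
    simp only [dotProduct, sq]
  rw [Vfun, hquad]
  congr 2
  rcases n.eq_zero_or_pos with rfl | hn
  · simp
  · field_simp

theorem Vfun_zero (b u : Fin p → ℝ) : Vfun X w lam r b u 0 = 0 := by
  simp [Vfun]

variable {X w lam r}

theorem sum_sq_mulVec_add_le_of_Vfun_nonpos (hw : ∀ j, 0 ≤ w j) (hlam : 0 ≤ lam) (hr : 0 < r)
    {s : Finset (Fin p)} {b u δ : Fin p → ℝ} (hb : ∀ j ∉ s, b j = 0)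
    (hu : ∀ j, |u j| ≤ lam / 2 * w j) (hV : Vfun X w lam r b u δ ≤ 0) :
    ∑ i, (X *ᵥ δ) i ^ 2 + n * lam * r * ∑ j ∈ sᶜ, w j * |δ j| ≤
      3 * (n * lam * r) * ∑ j ∈ s, w j * |δ j| := by
  rw [Vfun_eq] at hV
  set P := ∑ j, w j * (|b j + δ j / r| - |b j|)
  have hlin := dotProduct_le_mul_sum_mul_abs hu δ
  have hpen := sum_compl_sub_sum_le_penalty hw hr hb δ
  rw [← sum_add_sum_compl s] at hlin
  rw [div_le_iff₀ hr] at hpen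
  have hscaled : 2 * r ^ 2 * ((2 * r ^ 2)⁻¹ * ∑ i, (X *ᵥ δ) i ^ 2 - n / r * (δ ⬝ᵥ u) + n * lam * P)
      = ∑ i, (X *ᵥ δ) i ^ 2 - 2 * n * r * (δ ⬝ᵥ u) + 2 * (n * lam * r) * (P * r) := by
    field_simp
  linarith [mul_le_mul_of_nonneg_left hlin (by positivity : (0 : ℝ) ≤ 2 * n * r),
    mul_le_mul_of_nonneg_left hpen (by positivity : (0 : ℝ) ≤ 2 * (n * lam * r)),
    mul_nonpos_of_nonneg_of_nonpos (by positivity : (0 : ℝ) ≤ 2 * r ^ 2) hV]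

theorem cone_and_sum_mul_abs_le_of_Vfun_nonpos (hw : ∀ j, 0 ≤ w j) (hlam : 0 < lam)
    (hr : 0 < r) (hn : 0 < n) {κ : ℝ} (hκ : 0 < κ) {s : Finset (Fin p)}
    (hRE : ∀ δ : Fin p → ℝ, δ ≠ 0 → ∑ j ∈ sᶜ, w j * |δ j| ≤ 3 * ∑ j ∈ s, w j * |δ j| →
      κ * √n * √(∑ j ∈ s, δ j ^ 2) ≤ √(∑ i, (X *ᵥ δ) i ^ 2))
    {b u δ : Fin p → ℝ} (hb : ∀ j ∉ s, b j = 0) (hu : ∀ j, |u j| ≤ lam / 2 * w j)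
    (hV : Vfun X w lam r b u δ ≤ 0) :
    ∑ j ∈ sᶜ, w j * |δ j| ≤ 3 * ∑ j ∈ s, w j * |δ j| ∧
      ∑ j ∈ s, w j * |δ j| ≤ 3 * lam * r * (∑ j ∈ s, w j ^ 2) / κ ^ 2 := by
  have hbasic := sum_sq_mulVec_add_le_of_Vfun_nonpos hw hlam.le hr hb hu hV
  have hQ : 0 ≤ ∑ i, (X *ᵥ δ) i ^ 2 := by positivity
  have hnonneg (t : Finset (Fin p)) : 0 ≤ ∑ j ∈ t, w j * |δ j| :=
    sum_nonneg fun j _ => mul_nonneg (hw j) (abs_nonneg _)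
  have hnlr : 0 < (n : ℝ) * lam * r := by positivity
  have hcone : ∑ j ∈ sᶜ, w j * |δ j| ≤ 3 * ∑ j ∈ s, w j * |δ j| :=
    le_of_mul_le_mul_left (by linarith) hnlr
  refine ⟨hcone, ?_⟩
  rcases eq_or_ne δ 0 with rfl | hδ
  · simp only [Pi.zero_apply, abs_zero, mul_zero, sum_const_zero]
    positivity
  have hsq := sq_mul_le_of_mul_sqrt_le hκ.le (Nat.cast_nonneg n) (by positivity) hQ
    (hRE δ hδ hcone)
  have hCS : (∑ j ∈ s, w j * |δ j|) ^ 2 ≤ (∑ j ∈ s, w j ^ 2) * ∑ j ∈ s, δ j ^ 2 := by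
    simpa only [sq_abs] using sum_mul_sq_le_sq_mul_sq s w (fun j => |δ j|)
  refine le_mul_div_sq_of_sq_le_mul (hnonneg s) (by positivity) (by positivity) hκ hCS ?_
  refine le_of_mul_le_mul_left ?_ (Nat.cast_pos.mpr hn)
  linarith [mul_nonneg hnlr.le (hnonneg sᶜ)]

theorem sum_sq_mulVec_midpoint (δ δ' : Fin p → ℝ) :
    ∑ i, (X *ᵥ ((2 : ℝ)⁻¹ • (δ + δ'))) i ^ 2 =
      (∑ i, (X *ᵥ δ) i ^ 2 + ∑ i, (X *ᵥ δ') i ^ 2) / 2 - (∑ i, (X *ᵥ (δ - δ')) i ^ 2) / 4 := by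
  simp only [mulVec_smul, mulVec_add, mulVec_sub, Pi.smul_apply, Pi.add_apply, Pi.sub_apply,
    smul_eq_mul, sum_div, ← sum_add_distrib, ← sum_sub_distrib]
  exact sum_congr rfl fun i _ => by ring

theorem sum_sq_mulVec_sub_le_of_minimizers (hw : ∀ j, 0 ≤ w j) (hlam : 0 ≤ lam) (hr : 0 < r)
    {b u u' δ δ' : Fin p → ℝ} (hδ : ∀ η, Vfun X w lam r b u δ ≤ Vfun X w lam r b u η)
    (hδ' : ∀ η, Vfun X w lam r b u' δ' ≤ Vfun X w lam r b u' η) :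
    ∑ i, (X *ᵥ (δ - δ')) i ^ 2 ≤ 2 * n * r * ((δ - δ') ⬝ᵥ (u - u')) := by
  have h := add_le_add (hδ ((2 : ℝ)⁻¹ • (δ + δ'))) (hδ' ((2 : ℝ)⁻¹ • (δ + δ')))
  have hpen := mul_le_mul_of_nonneg_left (two_mul_penalty_midpoint_le hw r b δ δ')
    (by positivity : (0 : ℝ) ≤ n * lam)
  simp only [Vfun_eq, sum_sq_mulVec_midpoint, smul_dotProduct, add_dotProduct, smul_eq_mul] at h
  rw [sub_dotProduct, dotProduct_sub, dotProduct_sub]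
  have key : (2 * r ^ 2)⁻¹ * ((∑ i, (X *ᵥ (δ - δ')) i ^ 2) / 2) ≤
      n / r * ((δ ⬝ᵥ u - δ ⬝ᵥ u' - (δ' ⬝ᵥ u - δ' ⬝ᵥ u')) / 2) := by
    linarith
  calc ∑ i, (X *ᵥ (δ - δ')) i ^ 2
      = 4 * r ^ 2 * ((2 * r ^ 2)⁻¹ * ((∑ i, (X *ᵥ (δ - δ')) i ^ 2) / 2)) := by
        field_simp; ring
    _ ≤ 4 * r ^ 2 * (n / r * ((δ ⬝ᵥ u - δ ⬝ᵥ u' - (δ' ⬝ᵥ u - δ' ⬝ᵥ u')) / 2)) := by gcongr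
    _ = 2 * n * r * (δ ⬝ᵥ u - δ ⬝ᵥ u' - (δ' ⬝ᵥ u - δ' ⬝ᵥ u')) := by field_simp; ring

theorem inv_mul_sum_sq_mulVec_sub_le (hw : ∀ j, 0 ≤ w j) (hlam : 0 < lam) (hr : 0 < r)
    {κ : ℝ} (hκ : 0 < κ) {s : Finset (Fin p)}
    (hRE : ∀ δ : Fin p → ℝ, δ ≠ 0 → ∑ j ∈ sᶜ, w j * |δ j| ≤ 3 * ∑ j ∈ s, w j * |δ j| →
      κ * √n * √(∑ j ∈ s, δ j ^ 2) ≤ √(∑ i, (X *ᵥ δ) i ^ 2))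
    {ζ : ℝ} (hζ : 0 ≤ ζ) {b u u' δ δ' : Fin p → ℝ} (hb : ∀ j ∉ s, b j = 0)
    (hu : ∀ j, |u j| ≤ lam / 2 * w j) (hu' : ∀ j, |u' j| ≤ lam / 2 * w j)
    (huu' : ∀ j, |u j - u' j| ≤ ζ * lam / 2 * w j)
    (hδ : ∀ η, Vfun X w lam r b u δ ≤ Vfun X w lam r b u η)
    (hδ' : ∀ η, Vfun X w lam r b u' δ' ≤ Vfun X w lam r b u' η) :
    (n : ℝ)⁻¹ * ∑ i, (X *ᵥ (δ - δ')) i ^ 2 ≤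
      24 * r ^ 2 * lam ^ 2 * ζ * (∑ j ∈ s, w j ^ 2) / κ ^ 2 := by
  rcases n.eq_zero_or_pos with rfl | hn
  · simp only [CharP.cast_eq_zero, _root_.inv_zero, zero_mul]
    positivity
  obtain ⟨hcone, hT⟩ := cone_and_sum_mul_abs_le_of_Vfun_nonpos hw hlam hr hn hκ hRE hb hu
    (Vfun_zero X w lam r b u ▸ hδ 0)
  obtain ⟨hcone', hT'⟩ := cone_and_sum_mul_abs_le_of_Vfun_nonpos hw hlam hr hn hκ hRE hb hu'
    (Vfun_zero X w lam r b u' ▸ hδ' 0)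
  have hnoise : (δ - δ') ⬝ᵥ (u - u') ≤ ζ * lam / 2 * ∑ j, w j * |δ j - δ' j| :=
    dotProduct_le_mul_sum_mul_abs huu' (δ - δ')
  have hl1 : ∑ j, w j * |δ j - δ' j| ≤ 8 * (3 * lam * r * (∑ j ∈ s, w j ^ 2) / κ ^ 2) := by
    have := sum_mul_abs_sub_le hw δ δ'
    have := sum_mul_abs_le_four_mul_of_cone hcone
    have := sum_mul_abs_le_four_mul_of_cone hcone'
    linarith
  rw [inv_mul_le_iff₀ (by positivity)]
  calc ∑ i, (X *ᵥ (δ - δ')) i ^ 2 ≤ 2 * n * r * ((δ - δ') ⬝ᵥ (u - u')) :=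
        sum_sq_mulVec_sub_le_of_minimizers hw hlam.le hr hδ hδ'
    _ ≤ 2 * n * r * (ζ * lam / 2 * (8 * (3 * lam * r * (∑ j ∈ s, w j ^ 2) / κ ^ 2))) := by
        gcongr
        exact hnoise.trans (by gcongr)
    _ = n * (24 * r ^ 2 * lam ^ 2 * ζ * (∑ j ∈ s, w j ^ 2) / κ ^ 2) := by ring

end Vfun

theorem prediction_diff_bound_scaled_noise_general {n p : ℕ}
    (X : Matrix (Fin n) (Fin p) ℝ) (w : Fin p → ℝ) (hw : ∀ j, 0 < w j)
    (lam : ℝ) (hlam : 0 < lam) (r : ℝ) (hr : 0 < r)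
    (wmin wmax : ℝ) (hwmin : IsLeast (Set.range w) wmin)
    (hwmax : IsGreatest (Set.range w) wmax)
    (βc : Fin p → ℝ)
    (A₀ Ac : Finset (Fin p))
    (hAc : ∀ j, j ∈ Ac ↔ βc j ≠ 0) (hsub : Ac ⊆ A₀)
    (q : ℕ) (hcard : Ac.card ≤ q)
    (σ σh : ℝ)
    (ζ : ℝ) (hζ0 : 0 ≤ ζ)
    (hσζ : max |σh / σ - 1| |σ / σh - 1| ≤ ζ)
    -- Assumption RE(q, 3)
    (κq : ℝ) (hκq : 0 < κq)
    (hREq : ∀ A : Finset (Fin p), A.card ≤ q → ∀ δ : Fin p → ℝ, δ ≠ 0 →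
      (∑ j ∈ Aᶜ, w j * |δ j|) ≤ 3 * ∑ j ∈ A, w j * |δ j| →
      κq * Real.sqrt n * Real.sqrt (∑ j ∈ A, δ j ^ 2) ≤
        Real.sqrt (∑ i, (X.mulVec δ i) ^ 2))
    (ustar : Fin p → ℝ) (hustar : ∀ j, |ustar j| ≤ (1 - ζ) * (w j * lam / 2))
    (δstar δstar0 : Fin p → ℝ)
    (hδstar : ∀ δ, Vfun X w lam r βc ustar δstar ≤ Vfun X w lam r βc ustar δ)
    (hδstar0 : ∀ δ, Vfun X w lam r βc ((σ / σh) • ustar) δstar0 ≤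
      Vfun X w lam r βc ((σ / σh) • ustar) δ) :
    (n : ℝ)⁻¹ * ∑ i, (X.mulVec (δstar - δstar0) i) ^ 2 ≤
      32 * wmax * r ^ 2 * lam ^ 2 * ζ * (∑ j ∈ A₀, w j ^ 2) /
        (wmin * κq ^ 2) := by
  obtain ⟨j₀, hj₀⟩ := hwmin.1
  have hwmin_pos : 0 < wmin := hj₀ ▸ hw j₀
  have hwmin_le : wmin ≤ wmax := hj₀ ▸ hwmax.2 ⟨j₀, rfl⟩
  have hρ : |1 - σ / σh| ≤ ζ := abs_sub_comm (σ / σh) 1 ▸ (le_max_right _ _).trans hσζ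
  have hρ' : |σ / σh| ≤ 1 + ζ := by
    have := abs_sub_abs_le_abs_sub (σ / σh) 1
    rw [abs_one, abs_sub_comm] at this
    linarith
  have hwl (j) : 0 ≤ w j * lam / 2 := by have := hw j; positivity
  have hu (j) : |ustar j| ≤ lam / 2 * w j := by
    linarith [hustar j, mul_nonneg hζ0 (hwl j)]
  have hu' (j) : |((σ / σh) • ustar) j| ≤ lam / 2 * w j := by
    rw [Pi.smul_apply, smul_eq_mul, abs_mul]
    linarith [mul_le_mul hρ' (hustar j) (abs_nonneg _) (by linarith),
      mul_nonneg (sq_nonneg ζ) (hwl j)]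
  have huu' (j) : |ustar j - ((σ / σh) • ustar) j| ≤ ζ * lam / 2 * w j := by
    rw [Pi.smul_apply, smul_eq_mul, ← one_sub_mul, abs_mul]
    exact (mul_le_mul hρ (hu j) (abs_nonneg _) hζ0).trans_eq (by ring)
  have hb : ∀ j ∉ Ac, βc j = 0 := fun j hj => not_not.mp ((hAc j).not.mp hj)
  calc (n : ℝ)⁻¹ * ∑ i, (X.mulVec (δstar - δstar0) i) ^ 2
      ≤ 24 * r ^ 2 * lam ^ 2 * ζ * (∑ j ∈ Ac, w j ^ 2) / κq ^ 2 :=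
        inv_mul_sum_sq_mulVec_sub_le (fun j => (hw j).le) hlam hr hκq (hREq Ac hcard) hζ0 hb
          hu hu' huu' hδstar hδstar0
    _ ≤ 24 * r ^ 2 * lam ^ 2 * ζ * (∑ j ∈ A₀, w j ^ 2) / κq ^ 2 := by gcongr
    _ ≤ 32 * wmax * r ^ 2 * lam ^ 2 * ζ * (∑ j ∈ A₀, w j ^ 2) / (wmin * κq ^ 2) := by
        rw [div_le_div_iff₀ (by positivity) (by positivity)]
        have hM : 0 ≤ r ^ 2 * lam ^ 2 * ζ * (∑ j ∈ A₀, w j ^ 2) * κq ^ 2 := by positivity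
        linarith [mul_le_mul_of_nonneg_right (by linarith : 24 * wmin ≤ 32 * wmax) hM]

/-- If `|u*_j| ≤ (1 − ζ) w_j λ/2` for all `j` and `max{|σ̂/σ − 1|, |σ/σ̂ − 1|} ≤ ζ < 1`,
then the minimizers `δ* = argmin V(·; β̌, u*)` and `δ*₀ = argmin V(·; β̌, (σ/σ̂)u*)`
satisfy `(1/n)‖X(δ* − δ*₀)‖₂² ≤ 32 w_max r² λ² ζ Σ_{A₀} w_j² / (w_min κ(q,3)²)`. -/
theorem prediction_diff_bound_scaled_noise {n p : ℕ}
    (X : Matrix (Fin n) (Fin p) ℝ) (w : Fin p → ℝ) (hw : ∀ j, 0 < w j)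
    (lam : ℝ) (hlam : 0 < lam) (r : ℝ) (hr : 0 < r)
    (wmin wmax : ℝ) (hwmin : IsLeast (Set.range w) wmin)
    (hwmax : IsGreatest (Set.range w) wmax)
    (hdiag : ∀ j, ((n : ℝ)⁻¹ • (Xᵀ * X)) j j = 1)
    -- columns of X in general position: unique minimizers of V(·; β̌, u) for all u
    (huniq : ∀ b u : Fin p → ℝ, ∃! δ : Fin p → ℝ,
      ∀ δ', Vfun X w lam r b u δ ≤ Vfun X w lam r b u δ')
    (β₀ βc : Fin p → ℝ)
    (A₀ Ac : Finset (Fin p)) (hA₀ : ∀ j, j ∈ A₀ ↔ β₀ j ≠ 0)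
    (hAc : ∀ j, j ∈ Ac ↔ βc j ≠ 0) (hsub : Ac ⊆ A₀)
    (q : ℕ) (hcard : Ac.card ≤ q) (hqp : q ≤ p)
    (σ σh : ℝ) (hσ : 0 < σ) (hσh : 0 < σh)
    (ζ : ℝ) (hζ0 : 0 ≤ ζ) (hζ1 : ζ < 1)
    (hσζ : max |σh / σ - 1| |σ / σh - 1| ≤ ζ)
    -- Assumption RE(q, 3)
    (κq : ℝ) (hκq : 0 < κq)
    (hREq : ∀ A : Finset (Fin p), A.card ≤ q → ∀ δ : Fin p → ℝ, δ ≠ 0 →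
      (∑ j ∈ Aᶜ, w j * |δ j|) ≤ 3 * ∑ j ∈ A, w j * |δ j| →
      κq * Real.sqrt n * Real.sqrt (∑ j ∈ A, δ j ^ 2) ≤
        Real.sqrt (∑ i, (X.mulVec δ i) ^ 2))
    (ustar : Fin p → ℝ) (hustar : ∀ j, |ustar j| ≤ (1 - ζ) * (w j * lam / 2))
    (δstar δstar0 : Fin p → ℝ)
    (hδstar : ∀ δ, Vfun X w lam r βc ustar δstar ≤ Vfun X w lam r βc ustar δ)
    (hδstar0 : ∀ δ, Vfun X w lam r βc ((σ / σh) • ustar) δstar0 ≤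
      Vfun X w lam r βc ((σ / σh) • ustar) δ) :
    (n : ℝ)⁻¹ * ∑ i, (X.mulVec (δstar - δstar0) i) ^ 2 ≤
      32 * wmax * r ^ 2 * lam ^ 2 * ζ * (∑ j ∈ A₀, w j ^ 2) /
        (wmin * κq ^ 2) :=
  prediction_diff_bound_scaled_noise_general X w hw lam hlam r hr wmin wmax hwmin hwmax βc A₀ Ac hAc
    hsub q hcard σ σh ζ hζ0 hσζ κq hκq hREq ustar hustar δstar δstar0 hδstar hδstar0
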